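/- Let q, r ≥ 2 and 0 < α < 1, and let h be a Q_α-harmonic function on DL^s(q,r). Then there is a (unique) function g on D' = {y₁x₂ ∈ T_q × T_r : hor(y₁) + hor(x₂) = −1} such that h(x₁x₂) = g(x₁⁻ x₂) for all x₁x₂ ∈ DL^s(q,r), and g is P'-harmonic on D', where P' is the transition matrix on D' given by p'(y₁x₂, z₁z₂) = α/q if z₁⁻ = y₁ and z₂ = x₂⁻, p'(y₁x₂, z₁z₂) = (1−α)/r if z₁ = y₁⁻ and z₂⁻ = x₂, and 0 otherwise (the same rule as P_α, on the horocyclic product with level sum −1). -/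

import Mathlib

open scoped Classical

noncomputable section

namespace LampDL

variable {X : Type*}

/-- `n`-step transition probabilities of the Markov chain with transition matrix `p`. -/
def matpow (p : X → X → ℝ) : ℕ → X → X → ℝ
  | 0 => fun x y => if x = y then 1 else 0
  | n + 1 => fun x y => ∑' z, p x z * matpow p n z y

/-- A (countable) stochastic transition matrix. -/
def IsStochastic (p : X → X → ℝ) : Prop :=
  (∀ x y, 0 ≤ p x y) ∧ ∀ x, HasSum (p x) 1

/-- Irreducibility: some power has positive entry for every pair. -/
def IsIrreducible (p : X → X → ℝ) : Prop := ∀ x y, ∃ n, 0 < matpow p n x y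

/-- `hitBefore p A y n x` is the probability that the chain started at `x` avoids `A`
at all times `< n` and is at `y` at time `n`.  For `y ∈ A`, summing over `n` yields
`F^A(x,y) = Pr_x[s^y ≤ s^A, s^y < ∞]`. -/
def hitBefore (p : X → X → ℝ) (A : Set X) (y : X) : ℕ → X → ℝ
  | 0 => fun x => if x = y then 1 else 0
  | n + 1 => fun x => if x ∈ A then 0 else ∑' z, p x z * hitBefore p A y n z

/-- `F^A(x,y) = Pr_x[s^y ≤ s^A, s^y < ∞]` (for `y ∈ A`). -/
def FA (p : X → X → ℝ) (A : Set X) (x y : X) : ℝ := ∑' n, hitBefore p A y n x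

/-- `F(x,y) = Pr_x[s^y < ∞]`, the probability of ever hitting `y` from `x`. -/
def Fhit (p : X → X → ℝ) (x y : X) : ℝ := FA p {y} x y

/-- A function is `P`-harmonic if `∑_y p(x,y) h(y) = h(x)` for every `x`. -/
def IsHarmonic (p : X → X → ℝ) (h : X → ℝ) : Prop := ∀ x, ∑' y, p x y * h y = h x

/-- A minimal harmonic function (w.r.t. the reference point `o`). -/
def IsMinimalHarmonic (p : X → X → ℝ) (o : X) (h : X → ℝ) : Prop :=
  IsHarmonic p h ∧ (∀ x, 0 ≤ h x) ∧ h o = 1 ∧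
    ∀ h₁ : X → ℝ, IsHarmonic p h₁ → (∀ x, 0 ≤ h₁ x) → (∀ x, h₁ x ≤ h x) →
      ∃ c : ℝ, ∀ x, h₁ x = c * h x

/-- Vertices of the homogeneous tree `T_q`, modelled as pairs `(σ, k)` where
`σ : ℤ → ZMod q` is finitely supported with `σ n = 0` for `n > 0`. -/
structure TV (q : ℕ) where
  σ : ℤ → ZMod q
  k : ℤ
  fin : (Function.support σ).Finite
  upz : ∀ n : ℤ, 0 < n → σ n = 0

lemma fin_aux {q : ℕ} (g : ℤ → ZMod q) (hg : (Function.support g).Finite)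
    (f : ℤ → ℤ) (hf : Function.Injective f) :
    (Function.support fun n => if n ≤ 0 then g (f n) else 0).Finite := by
  refine Set.Finite.subset (hg.preimage hf.injOn) ?_
  intro n hn
  simp only [Function.mem_support] at hn
  by_cases hle : n ≤ 0
  · simp only [hle, if_true] at hn
    simpa [Set.mem_preimage, Function.mem_support] using hn
  · simp [hle] at hn

/-- The predecessor `x⁻` of a vertex of `T_q` (w.r.t. the reference end `ω`). -/
def pred {q : ℕ} (x : TV q) : TV q where
  σ := fun n => if n ≤ 0 then x.σ (n - 1) else 0
  k := x.k - 1
  fin := fin_aux x.σ x.fin (fun n => n - 1) sub_left_injective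
  upz := fun n hn => by simp [not_le.mpr hn]

/-- The vertex on the geodesic `ω o` at Busemann level `k` (zero configuration). -/
def rootAt (q : ℕ) (k : ℤ) : TV q := ⟨fun _ => 0, k, by simp, fun _ _ => rfl⟩

/-- The Diestel–Leader graph `DL(q,r)`. -/
def DL (q r : ℕ) := {x : TV q × TV r // x.1.k + x.2.k = 0}

/-- The root `o = o₁o₂` of `DL(q,r)`. -/
def oDL (q r : ℕ) : DL q r := ⟨(rootAt q 0, rootAt r 0), by simp [rootAt]⟩

/-- The projected transition matrix `P₁ = P_{1,α}` on `T_q`. -/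
def p1 (q : ℕ) (α : ℝ) (x y : TV q) : ℝ :=
  if pred y = x then α / (q : ℝ) else if y = pred x then 1 - α else 0

/-- The projected transition matrix `P₂ = P_{2,1-α}` on `T_r`. -/
def p2 (r : ℕ) (α : ℝ) (x y : TV r) : ℝ :=
  if y = pred x then α else if pred y = x then (1 - α) / (r : ℝ) else 0

/-- The transition matrix `P_α` on `DL(q,r)`. -/
def pDL (q r : ℕ) (α : ℝ) (x y : DL q r) : ℝ :=
  if pred y.val.1 = x.val.1 ∧ y.val.2 = pred x.val.2 then α / (q : ℝ)
  else if y.val.1 = pred x.val.1 ∧ pred y.val.2 = x.val.2 then (1 - α) / (r : ℝ)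
  else 0


/-- Ends `ξ ∈ ∂*T_q`: configurations whose support is bounded below. -/
def BoundedBelowSupp (q : ℕ) (ξ : ℤ → ZMod q) : Prop := ∃ N : ℤ, ∀ n < N, ξ n = 0

/-- Configurations whose support is bounded above. -/
def BoundedAboveSupp (q : ℕ) (ξ : ℤ → ZMod q) : Prop := ∃ N : ℤ, ∀ n > N, ξ n = 0

/-- The confluent level `b(x,ξ)` (level of `x ⋏ ξ` w.r.t. `ω`) of a vertex `x ∈ T_q`
and an end `ξ ∈ ∂*T_q`. -/
def bconf (q : ℕ) (x : TV q) (ξ : ℤ → ZMod q) : ℤ :=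
  sInf ({m : ℤ | m ≤ x.k ∧ ξ (m + 1) ≠ x.σ (m + 1 - x.k)} ∪ {x.k})

/-- `F₁⁻ = F₁(x,x⁻) = min {1, (1-α)/α}`. -/
def F1m (α : ℝ) : ℝ := min 1 ((1 - α) / α)
/-- `F₁⁺ = F₁(x⁻,x) = min {1/q, α/((1-α)q)}`. -/
def F1p (q : ℕ) (α : ℝ) : ℝ := min (1 / (q : ℝ)) (α / ((1 - α) * (q : ℝ)))
/-- `F₂⁻ = min {1, α/(1-α)}`. -/
def F2m (α : ℝ) : ℝ := min 1 (α / (1 - α))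
/-- `F₂⁺ = min {1/r, (1-α)/(αr)}`. -/
def F2p (r : ℕ) (α : ℝ) : ℝ := min (1 / (r : ℝ)) ((1 - α) / (α * (r : ℝ)))

/-- The Martin kernel `K₁(·,ξ₁)` on `T_q`, `ξ₁ ∈ ∂*T_q`. -/
def K1 (q : ℕ) (α : ℝ) (x : TV q) (ξ : ℤ → ZMod q) : ℝ :=
  F1m α ^ x.k * (F1m α * F1p q α) ^ (bconf q (rootAt q 0) ξ - bconf q x ξ)

/-- The Martin kernel `K₂(·,ξ₂)` on `T_r`, `ξ₂ ∈ ∂*T_r`. -/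
def K2 (r : ℕ) (α : ℝ) (x : TV r) (ξ : ℤ → ZMod r) : ℝ :=
  F2m α ^ x.k * (F2m α * F2p r α) ^ (bconf r (rootAt r 0) ξ - bconf r x ξ)

/-- The vertex `u_m = (σ_m, m)` on the geodesic from `ω` to the end encoded by `ξ`. -/
def rayVertex (q : ℕ) (ξ : ℤ → ZMod q) (hξ : BoundedBelowSupp q ξ) (m : ℤ) : TV q where
  σ := fun n => if n ≤ 0 then ξ (m + n) else 0
  k := m
  fin := by
    obtain ⟨N, hN⟩ := hξ
    apply Set.Finite.subset (Set.finite_Icc (N - m) 0)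
    intro n hn
    simp only [Function.mem_support] at hn
    by_cases hle : n ≤ 0
    · simp only [hle, if_true] at hn
      have : ¬ (m + n < N) := fun hc => hn (hN _ hc)
      exact Set.mem_Icc.mpr ⟨by omega, hle⟩
    · simp [hle] at hn
  upz := fun n hn => by simp [not_le.mpr hn]

/-- The rooted subtree `S₁ = S₁^{(n)} ⊆ T_q` with root `a₁ = (0,-n)`. -/
def S1 (q : ℕ) (n : ℕ) : Set (TV q) :=
  {x | -(n : ℤ) ≤ x.k ∧ x.k ≤ (n : ℤ) ∧ pred^[(x.k + (n : ℤ)).toNat] x = rootAt q (-(n : ℤ))}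

/-- The set of leaves `∂*S₁` of `S₁^{(n)}`. -/
def S1leaves (q : ℕ) (n : ℕ) : Set (TV q) := {x | x ∈ S1 q n ∧ x.k = (n : ℤ)}

/-- The boundary `∂S₁ = {a₁} ∪ ∂*S₁` of `S₁^{(n)}`. -/
def S1bd (q : ℕ) (n : ℕ) : Set (TV q) := insert (rootAt q (-(n : ℤ))) (S1leaves q n)

/-- The horocyclic product `S = S^{(n)}` of `S₁` and `S₂` inside `DL(q,r)`. -/
def Sdl (q r : ℕ) (n : ℕ) : Set (DL q r) := {x | x.val.1 ∈ S1 q n ∧ x.val.2 ∈ S1 r n}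

/-- The boundary `∂S = (∂*S₁ × {a₂}) ∪ ({a₁} × ∂*S₂)` of `S^{(n)}`. -/
def Sbd (q r : ℕ) (n : ℕ) : Set (DL q r) :=
  {x | (x.val.1 ∈ S1leaves q n ∧ x.val.2 = rootAt r (-(n : ℤ))) ∨
       (x.val.1 = rootAt q (-(n : ℤ)) ∧ x.val.2 ∈ S1leaves r n)}

/-- A leaf `y₁ ∈ ∂*S₁` together with `a₂` gives a vertex `y₁a₂` of `DL(q,r)`. -/
def liftLeaf1 (q r : ℕ) (n : ℕ) (y : TV q) (hy : y ∈ S1leaves q n) : DL q r :=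
  ⟨(y, rootAt r (-(n : ℤ))), by have h2 := hy.2; show y.k + (-(n : ℤ)) = 0; omega⟩

/-- The vertex `a₁y₂` of `DL(q,r)` for a leaf `y₂ ∈ ∂*S₂`. -/
def liftLeaf2 (q r : ℕ) (n : ℕ) (y : TV r) (hy : y ∈ S1leaves r n) : DL q r :=
  ⟨(rootAt q (-(n : ℤ)), y), by have h2 := hy.2; show (-(n : ℤ)) + y.k = 0; omega⟩



/-- Elements of the lamplighter group `Γ = ℤ_q ≀ ℤ`: pairs `(η,k)` with `η`
finitely supported. -/
structure LP (q : ℕ) where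
  η : ℤ → ZMod q
  k : ℤ
  fin : (Function.support η).Finite

/-- The identity element `e = (0,0)` of `ℤ_q ≀ ℤ`. -/
def eLP (q : ℕ) : LP q := ⟨fun _ => 0, 0, by simp⟩

/-- Multiplication in `ℤ_q ≀ ℤ`: `(η,k)(η',k') = (η + η'(· − k), k + k')`. -/
def lmul {q : ℕ} (g h : LP q) : LP q where
  η := fun n => g.η n + h.η (n - g.k)
  k := g.k + h.k
  fin := by
    have hinj : Function.Injective (fun n : ℤ => n - g.k) := sub_left_injective
    apply Set.Finite.subset (Set.Finite.union g.fin (h.fin.preimage hinj.injOn))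
    intro n hn
    simp only [Function.mem_support] at hn
    by_cases h1 : g.η n = 0
    · right
      simp only [Set.mem_preimage, Function.mem_support]
      intro h2
      exact hn (by rw [h1, h2, add_zero])
    · left; exact h1

/-- The configuration `δ_j^ℓ` with value `ℓ` at `j` and `0` elsewhere. -/
def deltaCfg (q : ℕ) (j : ℤ) (ℓ : ZMod q) : ℤ → ZMod q := fun n => if n = j then ℓ else 0

/-- The group element `(δ_j^ℓ, k) ∈ ℤ_q ≀ ℤ`. -/
def deltaLP (q : ℕ) (j : ℤ) (ℓ : ZMod q) (k : ℤ) : LP q :=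
  ⟨deltaCfg q j ℓ, k, by
    apply Set.Finite.subset (Set.finite_singleton j)
    intro n hn
    simp only [Function.mem_support, deltaCfg] at hn
    by_cases h : n = j
    · simpa using h
    · simp [h] at hn⟩


/-- Adjacency in the tree `T_q`: one vertex is the predecessor of the other. -/
def adjT {q : ℕ} (x y : TV q) : Prop := pred x = y ∨ pred y = x

/-- Adjacency in `DL(q,r)`. -/
def adjDL {q r : ℕ} (x y : DL q r) : Prop :=
  adjT x.val.1 y.val.1 ∧ adjT x.val.2 y.val.2

/-- The identification `Φ : ℤ_q ≀ ℤ → DL(q,q)`, `Φ(η,k) = (η_k⁻,k)(η_k⁺,-k)`. -/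
def Phi (q : ℕ) (g : LP q) : DL q q :=
  ⟨(⟨fun n => if n ≤ 0 then g.η (g.k + n) else 0, g.k,
      fin_aux g.η g.fin (fun n => g.k + n) (add_right_injective g.k),
      fun n hn => by simp [not_le.mpr hn]⟩,
    ⟨fun n => if n ≤ 0 then g.η (g.k + 1 - n) else 0, -g.k,
      fin_aux g.η g.fin (fun n => g.k + 1 - n) sub_right_injective,
      fun n hn => by simp [not_le.mpr hn]⟩),
   by show g.k + -g.k = 0; omega⟩

/-- The transition matrix `Q_α` of the switch–walk–switch walk on `DL^s(q,r)`. -/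
def qDL (q r : ℕ) (α : ℝ) (x y : DL q r) : ℝ :=
  if pred (pred y.val.1) = pred x.val.1 ∧ y.val.2 = pred x.val.2 then α / ((q : ℝ) ^ 2)
  else if pred y.val.1 = pred (pred x.val.1) ∧ pred y.val.2 = x.val.2 then
    (1 - α) / ((q : ℝ) * (r : ℝ))
  else 0

/-- The horocyclic product `D'` of `T_q` and `T_r` at level sum `-1`. -/
def DL' (q r : ℕ) := {x : TV q × TV r // x.1.k + x.2.k = -1}

/-- The transition matrix `P'` on `D'` (same rule as `P_α`). -/
def pDL' (q r : ℕ) (α : ℝ) (x y : DL' q r) : ℝ :=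
  if pred y.val.1 = x.val.1 ∧ y.val.2 = pred x.val.2 then α / (q : ℝ)
  else if y.val.1 = pred x.val.1 ∧ pred y.val.2 = x.val.2 then (1 - α) / (r : ℝ)
  else 0

/-- The map `x₁x₂ ↦ x₁⁻x₂` from `DL^s(q,r)` onto `D'`. -/
def toDL' {q r : ℕ} (x : DL q r) : DL' q r :=
  ⟨(pred x.val.1, x.val.2), by
    have h := x.property; show x.val.1.k - 1 + x.val.2.k = -1; omega⟩

/-- Harmonicity for the simple ("walk forward and switch, or switch and walk
backward") lamplighter walk on `ℤ_q ≀ ℤ`, whose law is uniform on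
`{(δ₁^ℓ,1), (δ₀^ℓ,-1) : ℓ ∈ ZMod q}`. -/
def SRWHarmonic (q : ℕ) [NeZero q] (h : LP q → ℝ) : Prop :=
  ∀ g : LP q,
    (∑ ℓ : ZMod q, (h (lmul g (deltaLP q 1 ℓ 1)) + h (lmul g (deltaLP q 0 ℓ (-1)))))
      / (2 * (q : ℝ)) = h g

/-- The step `(δ₀^ℓ + δ₁^m, 1)` of the switch–walk–switch walk. -/
def swsStepP (q : ℕ) (ℓ m : ZMod q) : LP q :=
  ⟨fun n => if n = 0 then ℓ else if n = 1 then m else 0, 1, by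
    apply Set.Finite.subset ((Set.finite_singleton 1).insert (0:ℤ))
    intro n hn
    simp only [Function.mem_support] at hn
    by_cases h0 : n = 0
    · simp [h0]
    · by_cases h1 : n = 1
      · simp [h1]
      · simp [h0, h1] at hn⟩

/-- The step `(δ₀^ℓ + δ_{-1}^m, -1)` of the switch–walk–switch walk. -/
def swsStepM (q : ℕ) (ℓ m : ZMod q) : LP q :=
  ⟨fun n => if n = 0 then ℓ else if n = -1 then m else 0, -1, by
    apply Set.Finite.subset ((Set.finite_singleton (-1:ℤ)).insert (0:ℤ))
    intro n hn
    simp only [Function.mem_support] at hn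
    by_cases h0 : n = 0
    · simp [h0]
    · by_cases h1 : n = (-1 : ℤ)
      · simp [h1]
      · simp [h0, h1] at hn⟩

/-- Harmonicity for the switch–walk–switch lamplighter walk on `ℤ_q ≀ ℤ`, whose law
is uniform on `{(δ₀^ℓ + δ₁^m, 1), (δ₀^ℓ + δ_{-1}^m, -1) : ℓ, m ∈ ZMod q}`. -/
def SWSHarmonic (q : ℕ) [NeZero q] (h : LP q → ℝ) : Prop :=
  ∀ g : LP q,
    (∑ ℓ : ZMod q, ∑ m : ZMod q,
        (h (lmul g (swsStepP q ℓ m)) + h (lmul g (swsStepM q ℓ m))))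
      / (2 * (q : ℝ) ^ 2) = h g

/-- The positive defect `df⁺((η,k),ξ₁)`. -/
def dfPlus (q : ℕ) (g : LP q) (ξ : ℤ → ZMod q) : ℤ :=
  sInf ({n : ℤ | n ≤ g.k ∧ ξ (n + 1) ≠ g.η (n + 1)} ∪ {g.k}) -
    sInf ({m : ℤ | m ≤ 0 ∧ ξ (m + 1) ≠ 0} ∪ {0})

/-- The negative defect `df⁻((η,k),ξ₂)`. -/
def dfMinus (q : ℕ) (g : LP q) (ξ : ℤ → ZMod q) : ℤ :=
  sSup ({m : ℤ | 0 < m ∧ ξ m ≠ 0} ∪ {0}) -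
    sSup ({n : ℤ | g.k < n ∧ ξ n ≠ g.η n} ∪ {g.k})

/-- The defect `df⊕((η,k),ξ₁)` for the switch–walk–switch walk. -/
def dfOPlus (q : ℕ) (g : LP q) (ξ : ℤ → ZMod q) : ℤ :=
  sInf ({n : ℤ | n ≤ g.k ∧ ξ n ≠ g.η n} ∪ {g.k}) -
    sInf ({m : ℤ | m ≤ 0 ∧ ξ m ≠ 0} ∪ {0})

section FactorAux

variable {q r : ℕ}

lemma TV.ext' {x y : TV q} (hσ : x.σ = y.σ) (hk : x.k = y.k) : x = y := by
  cases x; cases y; cases hσ; cases hk; rfl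

/-- The child of `x` with lamp value `ℓ` at the new top position. -/
def child (x : TV q) (ℓ : ZMod q) : TV q where
  σ := fun n => if n = 0 then ℓ else if n ≤ 0 then x.σ (n + 1) else 0
  k := x.k + 1
  fin := by
    apply Set.Finite.subset
      ((fin_aux x.σ x.fin (fun n => n + 1) (add_left_injective 1)).insert 0)
    intro n hn
    simp only [Function.mem_support] at hn
    rcases eq_or_ne n 0 with h0 | h0
    · exact Set.mem_insert_iff.mpr (Or.inl h0)
    · refine Set.mem_insert_iff.mpr (Or.inr ?_)
      simp only [Function.mem_support]
      simpa [h0] using hn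
  upz := fun n hn => by
    have h0 : ¬ n = 0 := by omega
    simp [h0, not_le.mpr hn]

@[simp] lemma child_k (x : TV q) (ℓ : ZMod q) : (child x ℓ).k = x.k + 1 := rfl
@[simp] lemma pred_k (x : TV q) : (pred x).k = x.k - 1 := rfl

lemma pred_child (x : TV q) (ℓ : ZMod q) : pred (child x ℓ) = x := by
  apply TV.ext'
  · funext n
    by_cases hn : n ≤ 0
    · have h0 : ¬ (n - 1 = 0) := by omega
      have h1 : n - 1 ≤ 0 := by omega
      have h2 : n - 1 + 1 = n := by omega
      simp [pred, child, hn, h0, h1, h2]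
      intro hc
      exact absurd hn (by omega)
    · simp [pred, child, hn, x.upz n (by omega)]
  · show x.k + 1 - 1 = x.k
    ring

lemma eq_child_of_pred {w x : TV q} (hw : pred w = x) : w = child x (w.σ 0) := by
  subst hw
  apply TV.ext'
  · funext n
    rcases eq_or_ne n 0 with h0 | h0
    · simp [child, h0]
    · by_cases hn : n ≤ 0
      · have h1 : n + 1 ≤ 0 := by omega
        have h2 : n + 1 - 1 = n := by omega
        simp [child, pred, h0, hn, h1, h2]
        intro hc
        exact absurd hc (by omega)
      · simp [child, h0, hn, w.upz n (by omega)]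
  · show w.k = w.k - 1 + 1
    ring

lemma child_inj {x y : TV q} {a b : ZMod q} (h : child x a = child y b) : x = y ∧ a = b := by
  constructor
  · rw [← pred_child x a, h, pred_child]
  · have h2 : (child x a).σ 0 = (child y b).σ 0 := by rw [h]
    simpa [child] using h2

lemma pred_pred_ne (x : TV q) : pred (pred x) ≠ x := by
  intro h
  have hk : x.k - 1 - 1 = x.k := congrArg TV.k h
  omega

lemma child_ne_pred (x : TV q) (ℓ : ZMod q) : child x ℓ ≠ pred x := by
  intro h
  have hk : x.k + 1 = x.k - 1 := congrArg TV.k h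
  omega

/-- Child in the first coordinate, predecessor in the second, inside `D'`. -/
def zA (y : DL' q r) (a : ZMod q) : DL' q r :=
  ⟨(child y.val.1 a, pred y.val.2), by
    have hp := y.property
    show y.val.1.k + 1 + (y.val.2.k - 1) = -1
    omega⟩

/-- Predecessor in the first coordinate, child in the second, inside `D'`. -/
def zB (y : DL' q r) (b : ZMod r) : DL' q r :=
  ⟨(pred y.val.1, child y.val.2 b), by
    have hp := y.property
    show y.val.1.k - 1 + (y.val.2.k + 1) = -1
    omega⟩

/-- Targets of the first kind of `Q_α`-step from `x`. -/
def wA (x : DL q r) (p : ZMod q × ZMod q) : DL q r :=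
  ⟨(child (child (pred x.val.1) p.1) p.2, pred x.val.2), by
    have hp := x.property
    show x.val.1.k - 1 + 1 + 1 + (x.val.2.k - 1) = 0
    omega⟩

/-- Targets of the second kind of `Q_α`-step from `x`. -/
def wB (x : DL q r) (p : ZMod q × ZMod r) : DL q r :=
  ⟨(child (pred (pred x.val.1)) p.1, child x.val.2 p.2), by
    have hp := x.property
    show x.val.1.k - 1 - 1 + 1 + (x.val.2.k + 1) = 0
    omega⟩

lemma pDL'_zA (α : ℝ) (y : DL' q r) (a : ZMod q) :
    pDL' q r α y (zA y a) = α / q := by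
  unfold pDL'
  rw [if_pos ⟨pred_child _ _, rfl⟩]

lemma pDL'_zB (α : ℝ) (y : DL' q r) (b : ZMod r) :
    pDL' q r α y (zB y b) = (1 - α) / r := by
  unfold pDL'
  rw [if_neg (fun hc => pred_pred_ne y.val.1 hc.1), if_pos ⟨rfl, pred_child _ _⟩]

lemma qDL_wA (α : ℝ) (x : DL q r) (p : ZMod q × ZMod q) :
    qDL q r α x (wA x p) = α / (q : ℝ) ^ 2 := by
  have h1 : pred (pred (wA x p).val.1) = pred x.val.1 := by
    show pred (pred (child (child (pred x.val.1) p.1) p.2)) = pred x.val.1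
    rw [pred_child, pred_child]
  unfold qDL
  rw [if_pos ⟨h1, rfl⟩]

lemma qDL_wB (α : ℝ) (x : DL q r) (p : ZMod q × ZMod r) :
    qDL q r α x (wB x p) = (1 - α) / ((q : ℝ) * r) := by
  unfold qDL
  rw [if_neg (fun hc => child_ne_pred x.val.2 p.2 hc.2),
    if_pos ⟨pred_child _ _, pred_child _ _⟩]

lemma pDL'_eq_zero {α : ℝ} {y z : DL' q r}
    (hA : ∀ a, z ≠ zA y a) (hB : ∀ b, z ≠ zB y b) : pDL' q r α y z = 0 := by
  unfold pDL'
  rw [if_neg (fun hc => hA (z.val.1.σ 0)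
        (Subtype.ext (Prod.ext (eq_child_of_pred hc.1) hc.2))),
    if_neg (fun hc => hB (z.val.2.σ 0)
        (Subtype.ext (Prod.ext hc.1 (eq_child_of_pred hc.2))))]

lemma qDL_eq_zero {α : ℝ} {x z : DL q r}
    (hA : ∀ p, z ≠ wA x p) (hB : ∀ p, z ≠ wB x p) : qDL q r α x z = 0 := by
  unfold qDL
  rw [if_neg, if_neg]
  · rintro ⟨h1, h2⟩
    exact hB (z.val.1.σ 0, z.val.2.σ 0)
      (Subtype.ext (Prod.ext (eq_child_of_pred h1) (eq_child_of_pred h2)))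
  · rintro ⟨h1, h2⟩
    have e1 := eq_child_of_pred h1
    have e2 := eq_child_of_pred (rfl : pred z.val.1 = pred z.val.1)
    rw [e1] at e2
    exact hA ((pred z.val.1).σ 0, z.val.1.σ 0) (Subtype.ext (Prod.ext e2 h2))

lemma tsum_pDL' [NeZero q] [NeZero r] (α : ℝ) (g : DL' q r → ℝ) (y : DL' q r) :
    ∑' z, pDL' q r α y z * g z
      = α / q * ∑ a : ZMod q, g (zA y a) + (1 - α) / r * ∑ b : ZMod r, g (zB y b) := by
  classical
  have hAinj : ∀ a ∈ (Finset.univ : Finset (ZMod q)), ∀ b ∈ Finset.univ,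
      zA y a = zA y b → a = b := by
    intro a _ b _ hab
    have h1 : child y.val.1 a = child y.val.1 b := congrArg (fun z : DL' q r => z.val.1) hab
    exact (child_inj h1).2
  have hBinj : ∀ a ∈ (Finset.univ : Finset (ZMod r)), ∀ b ∈ Finset.univ,
      zB y a = zB y b → a = b := by
    intro a _ b _ hab
    have h1 : child y.val.2 a = child y.val.2 b := congrArg (fun z : DL' q r => z.val.2) hab
    exact (child_inj h1).2
  have hdisj : Disjoint ((Finset.univ : Finset (ZMod q)).image (zA y))
      ((Finset.univ : Finset (ZMod r)).image (zB y)) := by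
    rw [Finset.disjoint_left]
    intro z hz1 hz2
    obtain ⟨a, -, ha⟩ := Finset.mem_image.mp hz1
    obtain ⟨b, -, hb⟩ := Finset.mem_image.mp hz2
    have h1 : (zA y a).val.1.k = (zB y b).val.1.k := by rw [ha, hb]
    have h2 : y.val.1.k + 1 = y.val.1.k - 1 := h1
    omega
  have hsum : ∑' z, pDL' q r α y z * g z
      = ∑ z ∈ (Finset.univ.image (zA y) ∪ Finset.univ.image (zB y)),
          pDL' q r α y z * g z := by
    apply tsum_eq_sum
    intro z hz
    have hA : ∀ a, z ≠ zA y a := fun a ha => hz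
      (Finset.mem_union_left _ (Finset.mem_image.mpr ⟨a, Finset.mem_univ a, ha.symm⟩))
    have hB : ∀ b, z ≠ zB y b := fun b hb => hz
      (Finset.mem_union_right _ (Finset.mem_image.mpr ⟨b, Finset.mem_univ b, hb.symm⟩))
    rw [pDL'_eq_zero hA hB, zero_mul]
  rw [hsum, Finset.sum_union hdisj, Finset.sum_image hAinj, Finset.sum_image hBinj]
  simp only [pDL'_zA, pDL'_zB]
  rw [← Finset.mul_sum, ← Finset.mul_sum]

lemma tsum_qDL [NeZero q] [NeZero r] (α : ℝ) (h : DL q r → ℝ) (x : DL q r) :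
    ∑' z, qDL q r α x z * h z
      = α / (q : ℝ) ^ 2 * ∑ p : ZMod q × ZMod q, h (wA x p)
        + (1 - α) / ((q : ℝ) * r) * ∑ p : ZMod q × ZMod r, h (wB x p) := by
  classical
  have hAinj : ∀ a ∈ (Finset.univ : Finset (ZMod q × ZMod q)), ∀ b ∈ Finset.univ,
      wA x a = wA x b → a = b := by
    intro a _ b _ hab
    have h1 : child (child (pred x.val.1) a.1) a.2 = child (child (pred x.val.1) b.1) b.2 :=
      congrArg (fun z : DL q r => z.val.1) hab
    obtain ⟨h2, h3⟩ := child_inj h1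
    obtain ⟨-, h4⟩ := child_inj h2
    exact Prod.ext h4 h3
  have hBinj : ∀ a ∈ (Finset.univ : Finset (ZMod q × ZMod r)), ∀ b ∈ Finset.univ,
      wB x a = wB x b → a = b := by
    intro a _ b _ hab
    have h1 : child (pred (pred x.val.1)) a.1 = child (pred (pred x.val.1)) b.1 :=
      congrArg (fun z : DL q r => z.val.1) hab
    have h2 : child x.val.2 a.2 = child x.val.2 b.2 :=
      congrArg (fun z : DL q r => z.val.2) hab
    exact Prod.ext (child_inj h1).2 (child_inj h2).2
  have hdisj : Disjoint ((Finset.univ : Finset (ZMod q × ZMod q)).image (wA x))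
      ((Finset.univ : Finset (ZMod q × ZMod r)).image (wB x)) := by
    rw [Finset.disjoint_left]
    intro z hz1 hz2
    obtain ⟨a, -, ha⟩ := Finset.mem_image.mp hz1
    obtain ⟨b, -, hb⟩ := Finset.mem_image.mp hz2
    have h1 : (wA x a).val.1.k = (wB x b).val.1.k := by rw [ha, hb]
    have h2 : x.val.1.k - 1 + 1 + 1 = x.val.1.k - 1 - 1 + 1 := h1
    omega
  have hsum : ∑' z, qDL q r α x z * h z
      = ∑ z ∈ (Finset.univ.image (wA x) ∪ Finset.univ.image (wB x)),
          qDL q r α x z * h z := by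
    apply tsum_eq_sum
    intro z hz
    have hA : ∀ p, z ≠ wA x p := fun p hp => hz
      (Finset.mem_union_left _ (Finset.mem_image.mpr ⟨p, Finset.mem_univ p, hp.symm⟩))
    have hB : ∀ p, z ≠ wB x p := fun p hp => hz
      (Finset.mem_union_right _ (Finset.mem_image.mpr ⟨p, Finset.mem_univ p, hp.symm⟩))
    rw [qDL_eq_zero hA hB, zero_mul]
  rw [hsum, Finset.sum_union hdisj, Finset.sum_image hAinj, Finset.sum_image hBinj]
  simp only [qDL_wA, qDL_wB]
  rw [← Finset.mul_sum, ← Finset.mul_sum]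

lemma h_const_sibling {α : ℝ} {h : DL q r → ℝ} (hh : IsHarmonic (qDL q r α) h)
    {x u : DL q r} (h1 : pred x.val.1 = pred u.val.1) (h2 : x.val.2 = u.val.2) :
    h x = h u := by
  have heq : qDL q r α x = qDL q r α u := by
    funext z
    unfold qDL
    rw [h1, h2]
  rw [← hh x, ← hh u, heq]

/-- A section of `toDL'`. -/
def liftD (y : DL' q r) : DL q r :=
  ⟨(child y.val.1 0, y.val.2), by
    have hp := y.property
    show y.val.1.k + 1 + y.val.2.k = 0
    omega⟩

lemma toDL'_liftD (y : DL' q r) : toDL' (liftD y) = y := by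
  exact Subtype.ext (Prod.ext (pred_child _ _) rfl)

end FactorAux

/-- every `Q_α`-harmonic function on `DL^s(q,r)` factors uniquely
through `x₁x₂ ↦ x₁⁻x₂` as a `P'`-harmonic function on `D'`. -/
theorem factor_harmonic (q r : ℕ) (hq : 2 ≤ q) (hr : 2 ≤ r) (α : ℝ)
    (hα0 : 0 < α) (hα1 : α < 1) (h : DL q r → ℝ) (hharm : IsHarmonic (qDL q r α) h) :
    ∃! g : DL' q r → ℝ,
      (∀ x : DL q r, h x = g (toDL' x)) ∧ IsHarmonic (pDL' q r α) g := by
  haveI : NeZero q := ⟨by omega⟩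
  haveI : NeZero r := ⟨by omega⟩
  have hq0 : (q : ℝ) ≠ 0 := Nat.cast_ne_zero.mpr (by omega)
  have hr0 : (r : ℝ) ≠ 0 := Nat.cast_ne_zero.mpr (by omega)
  have hfac : ∀ x : DL q r, h x = h (liftD (toDL' x)) := fun x =>
    h_const_sibling hharm (pred_child (pred x.val.1) 0).symm rfl
  refine ⟨fun y => h (liftD y), ⟨hfac, ?_⟩, ?_⟩
  · intro y
    rw [tsum_pDL']
    have key := hharm (liftD y)
    rw [tsum_qDL] at key
    have hA : ∀ p : ZMod q × ZMod q, h (wA (liftD y) p) = h (liftD (zA y p.1)) := by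
      intro p
      rw [hfac (wA (liftD y) p)]
      congr 1
      congr 1
      apply Subtype.ext
      apply Prod.ext
      · show pred (child (child (pred (child y.val.1 0)) p.1) p.2) = child y.val.1 p.1
        rw [pred_child, pred_child]
      · rfl
    have hB : ∀ p : ZMod q × ZMod r, h (wB (liftD y) p) = h (liftD (zB y p.2)) := by
      intro p
      rw [hfac (wB (liftD y) p)]
      congr 1
      congr 1
      apply Subtype.ext
      apply Prod.ext
      · show pred (child (pred (pred (child y.val.1 0))) p.1) = pred y.val.1
        rw [pred_child, pred_child]
      · rfl
    simp only [hA, hB] at key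
    have e1 : ∑ p : ZMod q × ZMod q, h (liftD (zA y p.1))
        = (q : ℝ) * ∑ a : ZMod q, h (liftD (zA y a)) := by
      rw [Fintype.sum_prod_type]
      simp only [Finset.sum_const, Finset.card_univ, ZMod.card, nsmul_eq_mul]
      rw [← Finset.mul_sum]
    have e2 : ∑ p : ZMod q × ZMod r, h (liftD (zB y p.2))
        = (q : ℝ) * ∑ b : ZMod r, h (liftD (zB y b)) := by
      rw [Fintype.sum_prod_type]
      simp only [Finset.sum_const, Finset.card_univ, ZMod.card, nsmul_eq_mul]
    rw [e1, e2] at key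
    show _ = h (liftD y)
    rw [← key]
    field_simp
  · intro g' hg'
    funext y
    have h1 := hg'.1 (liftD y)
    rw [toDL'_liftD] at h1
    exact h1.symm


end LampDL
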